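/- arXiv:0901.2513 — 6 statements merged into one kernel-verified Lean document; each statement's English description precedes it below -/
import Mathlib

section
/- Topological Goursat's Lemma: Let G₁, G₂ be profinite groups and H a maximal closed subgroup of G₁ × G₂ such that both projections π₁(H) = G₁ and π₂(H) = G₂. Let N₁ = H ∩ (G₁ × {1}) and N₂ = H ∩ ({1} × G₂), identified as subgroups of G₁ and G₂. Then N₁ and N₂ are open normal subgroups of G₁ and G₂ respectively, the quotients G₁/N₁ and G₂/N₂ are simple groups, and there is an isomorphism G₁/N₁ ≅ G₂/N₂ whose graph is induced by H. -/
/-!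
Every closed subgroup of a profinite group is the intersection of the open subgroups containing
it, so a maximal closed subgroup `H` is open. Then every subgroup above `H` is open, hence closed,
and `H` is a maximal subgroup outright. Goursat's lemma presents `H` as the graph of an
isomorphism `G₁ ⧸ N₁ ≃* G₂ ⧸ N₂`. For a normal `M ≥ N₁` of `G₁`, maximality leaves only
`H ⊔ (M × 1) = H`, i.e. `M = N₁`, or `H ⊔ (M × 1) = ⊤`, which forces `M = ⊤`; so `G₁ ⧸ N₁` is
simple, and so is the isomorphic `G₂ ⧸ N₂`.
-/

/-- A maximal closed subgroup: a proper closed subgroup not properly contained in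
any other proper closed subgroup. -/
def IsMaximalClosedSubgroup {G : Type*} [Group G] [TopologicalSpace G]
    (M : Subgroup G) : Prop :=
  IsClosed (M : Set G) ∧ M ≠ ⊤ ∧
    ∀ K : Subgroup G, IsClosed (K : Set G) → K ≠ ⊤ → M ≤ K → K = M

open Function

namespace QuotientGroup

variable {G : Type*} [Group G]

lemma isSimpleGroup_of_forall_normal_le {N : Subgroup G} [N.Normal] (hN : N ≠ ⊤)
    (h : ∀ M : Subgroup G, M.Normal → N ≤ M → M = N ∨ M = ⊤) : IsSimpleGroup (G ⧸ N) := by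
  have : Nontrivial (G ⧸ N) :=
    not_subsingleton_iff_nontrivial.mp (mt (subgroup_eq_top_of_subsingleton N) hN)
  refine ⟨fun M hM => (h _ (hM.comap (mk' N)) (le_comap_mk' N M)).imp (fun hMN => ?_) ?_⟩
  · rw [← Subgroup.map_comap_eq_self_of_surjective (mk'_surjective N) M, hMN, map_mk'_self]
  · exact fun hMtop =>
      Subgroup.comap_injective (mk'_surjective N) (hMtop.trans (Subgroup.comap_top _).symm)

end QuotientGroup

namespace Subgroup

variable {G H : Type*} [Group G] [Group H] {I : Subgroup (G × H)}

lemma surjective_fst_comp_subtype_iff :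
    Surjective (Prod.fst ∘ I.subtype) ↔ I.map (MonoidHom.fst G H) = ⊤ := by
  rw [← MonoidHom.coe_fst, ← MonoidHom.coe_comp, ← MonoidHom.range_eq_top,
    MonoidHom.range_comp, range_subtype]

lemma surjective_snd_comp_subtype_iff :
    Surjective (Prod.snd ∘ I.subtype) ↔ I.map (MonoidHom.snd G H) = ⊤ := by
  rw [← MonoidHom.coe_snd, ← MonoidHom.coe_comp, ← MonoidHom.range_eq_top,
    MonoidHom.range_comp, range_subtype]

lemma comap_inl_eq_goursatFst : I.comap (MonoidHom.inl G H) = I.goursatFst := by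
  ext; simp

lemma comap_inr_eq_goursatSnd : I.comap (MonoidHom.inr G H) = I.goursatSnd := by
  ext; simp

lemma exists_mulEquiv_mem_iff (hI₁ : Surjective (Prod.fst ∘ I.subtype))
    (hI₂ : Surjective (Prod.snd ∘ I.subtype)) :
    have := normal_goursatFst hI₁
    have := normal_goursatSnd hI₂
    ∃ e : G ⧸ I.goursatFst ≃* H ⧸ I.goursatSnd,
      ∀ g h, (g, h) ∈ I ↔ e g = h := by
  have := normal_goursatFst hI₁
  have := normal_goursatSnd hI₂
  obtain ⟨e, he⟩ := goursat_surjective hI₁ hI₂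
  refine ⟨e, fun g h => ⟨fun hgh => ?_, fun hgh => ?_⟩⟩
  · exact (he ▸ ⟨⟨(g, h), hgh⟩, rfl⟩ :
      ((g : G ⧸ I.goursatFst), (h : H ⧸ I.goursatSnd)) ∈ e.toMonoidHom.graph)
  · obtain ⟨⟨⟨a, b⟩, hab⟩, habgh⟩ : ((g : G ⧸ I.goursatFst), (h : H ⧸ I.goursatSnd)) ∈ _ :=
      he.symm ▸ (MonoidHom.mem_graph.mpr hgh)
    obtain ⟨ha, hb⟩ := Prod.ext_iff.mp habgh
    have hrest : (a⁻¹ * g, b⁻¹ * h) ∈ I :=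
      goursatFst_prod_goursatSnd_le I ⟨QuotientGroup.eq.mp ha, QuotientGroup.eq.mp hb⟩
    simpa using I.mul_mem hab hrest

lemma goursatFst_ne_top (hI : I ≠ ⊤) (hI₂ : Surjective (Prod.snd ∘ I.subtype)) :
    I.goursatFst ≠ ⊤ := by
  refine fun htop => hI (eq_top_iff.mpr fun ⟨g, h⟩ _ => ?_)
  obtain ⟨⟨⟨a, b⟩, hab⟩, rfl⟩ := hI₂ h
  have hg : (g * a⁻¹, (1 : H)) ∈ I := mem_goursatFst.mp (htop ▸ mem_top _)
  simpa using I.mul_mem hg hab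

lemma prod_bot_le_iff_le_goursatFst {M : Subgroup G} : M.prod ⊥ ≤ I ↔ M ≤ I.goursatFst := by
  refine ⟨fun h g hg => mem_goursatFst.mpr (h ⟨hg, one_mem _⟩), fun h ⟨g, k⟩ ⟨hg, hk⟩ => ?_⟩
  obtain rfl : k = 1 := hk
  exact mem_goursatFst.mp (h hg)

lemma eq_top_of_sup_prod_bot_eq_top {M : Subgroup G} [M.Normal] (hM : I.goursatFst ≤ M)
    (h : I ⊔ M.prod ⊥ = ⊤) : M = ⊤ := by
  refine eq_top_iff.mpr fun g _ => ?_
  obtain ⟨⟨a, b⟩, hab, ⟨m, k⟩, ⟨hm, hk⟩, habmk⟩ :=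
    mem_sup_of_normal_right.mp (h ▸ mem_top (g, (1 : H)))
  obtain rfl : k = 1 := hk
  obtain ⟨rfl, rfl⟩ : a * m = g ∧ b = 1 := by simpa using habmk
  exact M.mul_mem (hM (mem_goursatFst.mpr hab)) hm

lemma isSimpleGroup_quotient_goursatFst (hI : IsCoatom I)
    (hI₂ : Surjective (Prod.snd ∘ I.subtype)) [I.goursatFst.Normal] :
    IsSimpleGroup (G ⧸ I.goursatFst) := by
  refine QuotientGroup.isSimpleGroup_of_forall_normal_le (goursatFst_ne_top hI.ne_top hI₂)
    fun M _ hM => ?_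
  rcases hI.le_iff.mp (le_sup_left : I ≤ I ⊔ M.prod ⊥) with htop | hle
  · exact .inr (eq_top_of_sup_prod_bot_eq_top hM htop)
  · exact .inl (le_antisymm (prod_bot_le_iff_le_goursatFst.mp (hle ▸ le_sup_right)) hM)

end Subgroup

namespace IsMaximalClosedSubgroup

variable {G : Type*} [Group G] [TopologicalSpace G] [IsTopologicalGroup G] {H : Subgroup G}

lemma isOpen [CompactSpace G] [TotallyDisconnectedSpace G] (hH : IsMaximalClosedSubgroup H) :
    IsOpen (H : Set G) := by
  obtain ⟨hclosed, hne, hmax⟩ := hH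
  have hinf := ProfiniteGrp.closedSubgroup_eq_sInf_open ⟨H, hclosed⟩
  obtain ⟨N, ⟨hNopen, hHN⟩, hNne⟩ :
      ∃ N ∈ {N : Subgroup G | IsOpen (N : Set G) ∧ H ≤ N}, N ≠ ⊤ := by
    by_contra! hall
    exact hne (hinf.trans (sInf_eq_top.mpr hall))
  exact hmax N (N.isClosed_of_isOpen hNopen) hNne hHN ▸ hNopen

lemma isCoatom_of_isOpen (hH : IsMaximalClosedSubgroup H) (hopen : IsOpen (H : Set G)) :
    IsCoatom H :=
  ⟨hH.2.1, fun K hHK => by_contra fun hK =>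
    hHK.ne (hH.2.2 K (K.isClosed_of_isOpen (Subgroup.isOpen_mono hHK.le hopen)) hK hHK.le).symm⟩

end IsMaximalClosedSubgroup

theorem topological_goursat_general
    {G₁ G₂ : Type*} [Group G₁] [TopologicalSpace G₁] [IsTopologicalGroup G₁]
    [CompactSpace G₁] [TotallyDisconnectedSpace G₁]
    [Group G₂] [TopologicalSpace G₂] [IsTopologicalGroup G₂]
    [CompactSpace G₂] [TotallyDisconnectedSpace G₂]
    (H : Subgroup (G₁ × G₂)) (hmax : IsMaximalClosedSubgroup H)
    (h₁ : Subgroup.map (MonoidHom.fst G₁ G₂) H = ⊤)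
    (h₂ : Subgroup.map (MonoidHom.snd G₁ G₂) H = ⊤) :
    ∀ N₁ : Subgroup G₁, ∀ N₂ : Subgroup G₂,
      N₁ = Subgroup.comap (MonoidHom.inl G₁ G₂) H →
      N₂ = Subgroup.comap (MonoidHom.inr G₁ G₂) H →
      N₁.Normal ∧ N₂.Normal ∧ IsOpen (N₁ : Set G₁) ∧ IsOpen (N₂ : Set G₂) ∧
      ∃ _ : N₁.Normal, ∃ _ : N₂.Normal,
        IsSimpleGroup (G₁ ⧸ N₁) ∧ IsSimpleGroup (G₂ ⧸ N₂) ∧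
        ∃ φ : (G₁ ⧸ N₁) ≃* (G₂ ⧸ N₂),
          ∀ g₁ : G₁, ∀ g₂ : G₂,
            ((g₁, g₂) ∈ H ↔ φ (QuotientGroup.mk g₁) = QuotientGroup.mk g₂) := by
  intro N₁ N₂ hN₁ hN₂
  have hopen : IsOpen (H : Set (G₁ × G₂)) := hmax.isOpen
  have hopen₁ : IsOpen (N₁ : Set G₁) :=
    hN₁ ▸ hopen.preimage (continuous_id.prodMk continuous_const)
  have hopen₂ : IsOpen (N₂ : Set G₂) :=
    hN₂ ▸ hopen.preimage (continuous_const.prodMk continuous_id)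
  rw [Subgroup.comap_inl_eq_goursatFst] at hN₁
  rw [Subgroup.comap_inr_eq_goursatSnd] at hN₂
  subst hN₁ hN₂
  have hI₁ := Subgroup.surjective_fst_comp_subtype_iff.mpr h₁
  have hI₂ := Subgroup.surjective_snd_comp_subtype_iff.mpr h₂
  have hnormal₁ := Subgroup.normal_goursatFst hI₁
  have hnormal₂ := Subgroup.normal_goursatSnd hI₂
  obtain ⟨e, he⟩ := Subgroup.exists_mulEquiv_mem_iff hI₁ hI₂
  have hsimple := Subgroup.isSimpleGroup_quotient_goursatFst (hmax.isCoatom_of_isOpen hopen) hI₂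
  exact ⟨hnormal₁, hnormal₂, hopen₁, hopen₂, hnormal₁, hnormal₂, hsimple, e.symm.isSimpleGroup,
    e, he⟩

/-- Topological Goursat's lemma for a maximal closed subgroup of a product of two
profinite groups with surjective projections. -/
theorem topological_goursat
    {G₁ G₂ : Type*} [Group G₁] [TopologicalSpace G₁] [IsTopologicalGroup G₁]
    [CompactSpace G₁] [T2Space G₁] [TotallyDisconnectedSpace G₁]
    [Group G₂] [TopologicalSpace G₂] [IsTopologicalGroup G₂]
    [CompactSpace G₂] [T2Space G₂] [TotallyDisconnectedSpace G₂]
    (H : Subgroup (G₁ × G₂)) (hmax : IsMaximalClosedSubgroup H)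
    (h₁ : Subgroup.map (MonoidHom.fst G₁ G₂) H = ⊤)
    (h₂ : Subgroup.map (MonoidHom.snd G₁ G₂) H = ⊤) :
    ∀ N₁ : Subgroup G₁, ∀ N₂ : Subgroup G₂,
      N₁ = Subgroup.comap (MonoidHom.inl G₁ G₂) H →
      N₂ = Subgroup.comap (MonoidHom.inr G₁ G₂) H →
      N₁.Normal ∧ N₂.Normal ∧ IsOpen (N₁ : Set G₁) ∧ IsOpen (N₂ : Set G₂) ∧
      ∃ _ : N₁.Normal, ∃ _ : N₂.Normal,
        IsSimpleGroup (G₁ ⧸ N₁) ∧ IsSimpleGroup (G₂ ⧸ N₂) ∧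
        ∃ φ : (G₁ ⧸ N₁) ≃* (G₂ ⧸ N₂),
          ∀ g₁ : G₁, ∀ g₂ : G₂,
            ((g₁, g₂) ∈ H ↔ φ (QuotientGroup.mk g₁) = QuotientGroup.mk g₂) :=
  topological_goursat_general H hmax h₁ h₂
end

section
/- Let G₁, G₂ be profinite groups and H a maximal closed subgroup of G₁ × G₂ that surjects onto both factors. If G₁ and G₂ have no isomorphic finite nonabelian simple quotients in common (i.e. Quo(G₁) ∩ Quo(G₂) = ∅), then H contains the closed commutator subgroup (G₁ × G₂)'. -/
/-!
Put `N₁ = {a | (a, 1) ∈ H}` and `N₂ = {b | (1, b) ∈ H}`; by Goursat's lemma `N₁ × N₂ ≤ H` and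
`H` induces an isomorphism `G₁ ⧸ N₁ ≃* G₂ ⧸ N₂`. Maximality of `H` forces `N₁` to be maximal among
proper closed normal subgroups of `G₁`: if `N₁ ≤ M`, then `H ⊔ (M × N₂) = H · (M × N₂)` is closed
and proper, hence equal to `H`. Since `G₁` is profinite, `N₁` is then open, so `G₁ ⧸ N₁` is a
finite simple group, and `N₂` is closed of finite index, hence open. Thus `G₁ ⧸ N₁` is a common
finite simple continuous quotient of `G₁` and `G₂`, which must be abelian; so
`[G₁, G₁] × [G₂, G₂] ≤ N₁ × N₂ ≤ H`, and `H` is closed.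
-/

open Function

theorem QuotientGroup.isSimpleGroup_of_forall_normal_le_s3 {G : Type*} [Group G] {N : Subgroup G}
    [N.Normal] (hN : N ≠ ⊤) (h : ∀ M : Subgroup G, M.Normal → N ≤ M → M ≠ ⊤ → M ≤ N) :
    IsSimpleGroup (G ⧸ N) := by
  have : Nontrivial (G ⧸ N) := QuotientGroup.nontrivial_iff.mpr hN
  refine ⟨fun M hM => ?_⟩
  have hNM : N ≤ M.comap (QuotientGroup.mk' N) := fun x hx => by
    simp [(QuotientGroup.eq_one_iff x).mpr hx]
  rcases eq_or_ne (M.comap (QuotientGroup.mk' N)) ⊤ with htop | hne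
  · exact .inr <| Subgroup.comap_injective (QuotientGroup.mk'_surjective N) <| by
      rw [htop, Subgroup.comap_top]
  · refine .inl <| (Subgroup.eq_bot_iff_forall M).mpr fun q hq => ?_
    induction q using QuotientGroup.induction_on with | H x => ?_
    exact (QuotientGroup.eq_one_iff x).mpr (h _ (hM.comap _) hNM hne hq)

/-- `Quo(G₁) ∩ Quo(G₂) = ∅`, with the finite simple groups taken in `Type`. -/
def NoCommonNonabelianSimpleQuotient (G₁ G₂ : Type*) [Group G₁] [TopologicalSpace G₁]
    [Group G₂] [TopologicalSpace G₂] : Prop :=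
  ∀ (S : Type) [Group S] [Finite S] [TopologicalSpace S] [DiscreteTopology S],
    IsSimpleGroup S → (¬ ∀ a b : S, a * b = b * a) →
    ¬ ((∃ f : G₁ →* S, Continuous f ∧ Surjective f) ∧
       (∃ f : G₂ →* S, Continuous f ∧ Surjective f))

theorem NoCommonNonabelianSimpleQuotient.isMulCommutative {G₁ G₂ : Type*} [Group G₁]
    [TopologicalSpace G₁] [Group G₂] [TopologicalSpace G₂]
    (h : NoCommonNonabelianSimpleQuotient G₁ G₂)
    {Q : Type*} [Group Q] [Finite Q] [IsSimpleGroup Q] [TopologicalSpace Q] [DiscreteTopology Q]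
    {f₁ : G₁ →* Q} {f₂ : G₂ →* Q} (hf₁ : Continuous f₁) (hf₁' : Surjective f₁)
    (hf₂ : Continuous f₂) (hf₂' : Surjective f₂) : IsMulCommutative Q := by
  let e : Shrink.{0} Q ≃* Q := Shrink.mulEquiv
  let _ : TopologicalSpace (Shrink.{0} Q) := ⊥
  have : DiscreteTopology (Shrink.{0} Q) := ⟨rfl⟩
  have : Finite (Shrink.{0} Q) := .of_equiv Q e.symm.toEquiv
  have : Nontrivial (Shrink.{0} Q) := e.toEquiv.nontrivial
  have : IsSimpleGroup (Shrink.{0} Q) :=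
    IsSimpleGroup.isSimpleGroup_of_surjective e.symm.toMonoidHom e.symm.surjective
  refine isMulCommutative_iff.mpr fun a b => by_contra fun hab => ?_
  refine h (Shrink.{0} Q) inferInstance (fun hS => hab ?_)
    ⟨⟨e.symm.toMonoidHom.comp f₁, (continuous_of_discreteTopology (f := e.symm)).comp hf₁,
        e.symm.surjective.comp hf₁'⟩,
      ⟨e.symm.toMonoidHom.comp f₂, (continuous_of_discreteTopology (f := e.symm)).comp hf₂,
        e.symm.surjective.comp hf₂'⟩⟩
  simpa using congrArg e (hS (e.symm a) (e.symm b))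

theorem Subgroup.exists_isOpen_normal_ge_of_isClosed_of_ne_top {G : Type*} [Group G]
    [TopologicalSpace G] [IsTopologicalGroup G] [CompactSpace G] [TotallyDisconnectedSpace G]
    {N : Subgroup G} [N.Normal] (hNc : IsClosed (N : Set G)) (hN : N ≠ ⊤) :
    ∃ M : Subgroup G, M.Normal ∧ IsOpen (M : Set G) ∧ N ≤ M ∧ M ≠ ⊤ := by
  obtain ⟨g, hg⟩ := SetLike.exists_not_mem_of_ne_top N hN
  obtain ⟨V, hV⟩ := ProfiniteGrp.exist_openNormalSubgroup_sub_open_nhds_of_one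
    (hNc.isOpen_compl.preimage (continuous_const_mul g)) (by simpa using hg)
  refine ⟨N ⊔ V.toSubgroup, inferInstance, Subgroup.isOpen_mono le_sup_right V.isOpen,
    le_sup_left, fun htop => ?_⟩
  obtain ⟨n, hn, v, hv, rfl⟩ := Subgroup.mem_sup_of_normal_left.mp (htop ▸ Subgroup.mem_top g)
  exact hV (inv_mem hv) (by simpa using hn)

theorem IsMaximalClosedSubgroup.le_of_sup_ne_top {G : Type*} [Group G] [TopologicalSpace G]
    [IsTopologicalGroup G] [CompactSpace G] {H : Subgroup G} (hH : IsMaximalClosedSubgroup H)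
    {P : Subgroup G} [P.Normal] (hP : IsClosed (P : Set G)) (hHP : H ⊔ P ≠ ⊤) : P ≤ H := by
  have hclosed : IsClosed ((H ⊔ P : Subgroup G) : Set G) := by
    rw [Subgroup.mul_normal]
    exact hP.mul_left_of_isCompact hH.1.isCompact
  exact hH.2.2 _ hclosed hHP le_sup_left ▸ le_sup_right

namespace Subgroup

variable {G₁ G₂ : Type*} [Group G₁] [Group G₂] {H : Subgroup (G₁ × G₂)}

theorem goursatFst_ne_top_s3 (hH : H ≠ ⊤) (h₂ : Surjective (Prod.snd ∘ H.subtype)) :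
    H.goursatFst ≠ ⊤ := by
  refine fun htop => hH <| (eq_top_iff' H).mpr fun ⟨a, b⟩ => ?_
  obtain ⟨⟨⟨a', b'⟩, hab'⟩, rfl : b' = b⟩ := h₂ b
  have hfst : (a * a'⁻¹, (1 : G₂)) ∈ H := mem_goursatFst.mp (htop ▸ mem_top _)
  simpa using mul_mem hfst hab'

theorem sup_prod_goursatSnd_ne_top {M : Subgroup G₁} [M.Normal] [H.goursatSnd.Normal]
    (hM : H.goursatFst ≤ M) (hMt : M ≠ ⊤) : H ⊔ M.prod H.goursatSnd ≠ ⊤ := by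
  obtain ⟨g, hg⟩ := SetLike.exists_not_mem_of_ne_top M hMt
  refine fun htop => hg ?_
  obtain ⟨x, hx, y, ⟨hy₁, hy₂⟩, hxy⟩ :=
    mem_sup_of_normal_right.mp (htop ▸ mem_top ((g, 1) : G₁ × G₂))
  have hxy₂ : x.2 * y.2 = 1 := congrArg Prod.snd hxy
  have hx₁ : x.1 ∈ M := by
    have hmem : x * (1, y.2) = (x.1, 1) := Prod.ext (mul_one x.1) hxy₂
    exact hM (mem_goursatFst.mpr (hmem ▸ mul_mem hx (mem_goursatSnd.mp hy₂)))
  have hxy₁ : x.1 * y.1 = g := congrArg Prod.fst hxy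
  exact hxy₁ ▸ mul_mem hx₁ hy₁

end Subgroup

section Topology

variable {G₁ G₂ : Type*} [Group G₁] [TopologicalSpace G₁] [Group G₂] [TopologicalSpace G₂]
  {H : Subgroup (G₁ × G₂)}

theorem Subgroup.isClosed_goursatFst (hH : IsClosed (H : Set (G₁ × G₂))) :
    IsClosed (H.goursatFst : Set G₁) := by
  convert hH.preimage (continuous_id.prodMk (continuous_const (y := (1 : G₂)))) using 1
  ext; simp

theorem Subgroup.isClosed_goursatSnd (hH : IsClosed (H : Set (G₁ × G₂))) :
    IsClosed (H.goursatSnd : Set G₂) := by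
  convert hH.preimage ((continuous_const (y := (1 : G₁))).prodMk continuous_id) using 1
  ext; simp

variable [IsTopologicalGroup G₁] [CompactSpace G₁] [IsTopologicalGroup G₂] [CompactSpace G₂]

theorem IsMaximalClosedSubgroup.le_goursatFst (hH : IsMaximalClosedSubgroup H)
    (h₂ : Surjective (Prod.snd ∘ H.subtype)) {M : Subgroup G₁} [M.Normal]
    (hMc : IsClosed (M : Set G₁)) (hM : H.goursatFst ≤ M) (hMt : M ≠ ⊤) :
    M ≤ H.goursatFst := by
  have := Subgroup.normal_goursatSnd h₂
  have hP : M.prod H.goursatSnd ≤ H :=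
    hH.le_of_sup_ne_top (hMc.prod (Subgroup.isClosed_goursatSnd hH.1))
      (Subgroup.sup_prod_goursatSnd_ne_top hM hMt)
  exact fun m hm => Subgroup.mem_goursatFst.mpr (hP ⟨hm, H.goursatSnd.one_mem⟩)

theorem IsMaximalClosedSubgroup.isOpen_goursatFst [TotallyDisconnectedSpace G₁]
    (hH : IsMaximalClosedSubgroup H) (h₁ : Surjective (Prod.fst ∘ H.subtype))
    (h₂ : Surjective (Prod.snd ∘ H.subtype)) : IsOpen (H.goursatFst : Set G₁) := by
  have := Subgroup.normal_goursatFst h₁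
  obtain ⟨M, hMn, hMo, hNM, hMt⟩ := Subgroup.exists_isOpen_normal_ge_of_isClosed_of_ne_top
    (Subgroup.isClosed_goursatFst hH.1) (Subgroup.goursatFst_ne_top_s3 hH.2.1 h₂)
  exact Subgroup.isOpen_mono
    (hH.le_goursatFst h₂ (Subgroup.isClosed_of_isOpen M hMo) hNM hMt) hMo

theorem IsMaximalClosedSubgroup.isOpen_goursatSnd [TotallyDisconnectedSpace G₁]
    (hH : IsMaximalClosedSubgroup H) (h₁ : Surjective (Prod.fst ∘ H.subtype))
    (h₂ : Surjective (Prod.snd ∘ H.subtype)) : IsOpen (H.goursatSnd : Set G₂) := by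
  have := Subgroup.normal_goursatFst h₁
  have := Subgroup.normal_goursatSnd h₂
  obtain ⟨e, -⟩ := Subgroup.goursat_surjective h₁ h₂
  have := H.goursatFst.quotient_finite_of_isOpen (hH.isOpen_goursatFst h₁ h₂)
  have : Finite (G₂ ⧸ H.goursatSnd) := .of_equiv _ e.toEquiv
  have := Subgroup.finiteIndex_of_finite_quotient (H := H.goursatSnd)
  exact H.goursatSnd.isOpen_of_isClosed_of_finiteIndex (Subgroup.isClosed_goursatSnd hH.1)

theorem IsMaximalClosedSubgroup.isSimpleGroup_quotient_goursatFst [TotallyDisconnectedSpace G₁]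
    (hH : IsMaximalClosedSubgroup H) (h₁ : Surjective (Prod.fst ∘ H.subtype))
    (h₂ : Surjective (Prod.snd ∘ H.subtype)) [H.goursatFst.Normal] :
    IsSimpleGroup (G₁ ⧸ H.goursatFst) :=
  QuotientGroup.isSimpleGroup_of_forall_normal_le_s3 (Subgroup.goursatFst_ne_top_s3 hH.2.1 h₂)
    fun M _ hNM hMt => hH.le_goursatFst h₂ (Subgroup.isClosed_of_isOpen M <|
      Subgroup.isOpen_mono hNM (hH.isOpen_goursatFst h₁ h₂)) hNM hMt

theorem IsMaximalClosedSubgroup.isMulCommutative_quotient_goursatFst [TotallyDisconnectedSpace G₁]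
    (hH : IsMaximalClosedSubgroup H) (h₁ : Surjective (Prod.fst ∘ H.subtype))
    (h₂ : Surjective (Prod.snd ∘ H.subtype)) (hQuo : NoCommonNonabelianSimpleQuotient G₁ G₂)
    [H.goursatFst.Normal] [H.goursatSnd.Normal] : IsMulCommutative (G₁ ⧸ H.goursatFst) := by
  obtain ⟨e, -⟩ := Subgroup.goursat_surjective h₁ h₂
  have hN₁ := hH.isOpen_goursatFst h₁ h₂
  have := H.goursatFst.quotient_finite_of_isOpen hN₁
  have := QuotientGroup.discreteTopology hN₁
  have := QuotientGroup.discreteTopology (hH.isOpen_goursatSnd h₁ h₂)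
  have := hH.isSimpleGroup_quotient_goursatFst h₁ h₂
  exact hQuo.isMulCommutative QuotientGroup.continuous_mk (QuotientGroup.mk'_surjective _)
    (f₂ := e.symm.toMonoidHom.comp (QuotientGroup.mk' _))
    ((continuous_of_discreteTopology (f := e.symm)).comp QuotientGroup.continuous_mk)
    (e.symm.surjective.comp (QuotientGroup.mk'_surjective _))

end Topology

theorem Subgroup.surjective_comp_subtype_of_map_eq_top {G G' : Type*} [Group G] [Group G']
    {f : G →* G'} {H : Subgroup G} (h : H.map f = ⊤) : Surjective (f ∘ H.subtype) := by
  rwa [← MonoidHom.coe_comp, ← MonoidHom.range_eq_top, MonoidHom.range_comp, range_subtype]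

theorem commutator_prod (G₁ G₂ : Type*) [Group G₁] [Group G₂] :
    commutator (G₁ × G₂) = (commutator G₁).prod (commutator G₂) := by
  rw [commutator_def, ← Subgroup.top_prod_top, Subgroup.commutator_prod_prod, ← commutator_def,
    ← commutator_def]

theorem closed_commutator_le_of_maximal_closed_general
    {G₁ G₂ : Type*} [Group G₁] [TopologicalSpace G₁] [IsTopologicalGroup G₁]
    [CompactSpace G₁] [TotallyDisconnectedSpace G₁]
    [Group G₂] [TopologicalSpace G₂] [IsTopologicalGroup G₂]
    [CompactSpace G₂]
    (H : Subgroup (G₁ × G₂)) (hmax : IsMaximalClosedSubgroup H)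
    (h₁ : Subgroup.map (MonoidHom.fst G₁ G₂) H = ⊤)
    (h₂ : Subgroup.map (MonoidHom.snd G₁ G₂) H = ⊤)
    (hdisj : ∀ (S : Type) [Group S] [Finite S] [TopologicalSpace S] [DiscreteTopology S],
      IsSimpleGroup S → (¬ ∀ a b : S, a * b = b * a) →
      ¬ ((∃ f : G₁ →* S, Continuous f ∧ Function.Surjective f) ∧
         (∃ f : G₂ →* S, Continuous f ∧ Function.Surjective f))) :
    (commutator (G₁ × G₂)).topologicalClosure ≤ H := by
  have hs₁ : Surjective (Prod.fst ∘ H.subtype) := Subgroup.surjective_comp_subtype_of_map_eq_top h₁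
  have hs₂ : Surjective (Prod.snd ∘ H.subtype) := Subgroup.surjective_comp_subtype_of_map_eq_top h₂
  have := Subgroup.normal_goursatFst hs₁
  have := Subgroup.normal_goursatSnd hs₂
  obtain ⟨e, -⟩ := Subgroup.goursat_surjective hs₁ hs₂
  have := hmax.isMulCommutative_quotient_goursatFst hs₁ hs₂ hdisj
  have hc₁ : commutator G₁ ≤ H.goursatFst :=
    Subgroup.Normal.quotient_commutative_iff_commutator_le.mp inferInstance
  have hc₂ : commutator G₂ ≤ H.goursatSnd :=
    Subgroup.Normal.quotient_commutative_iff_commutator_le.mp <| isMulCommutative_iff.mpr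
      fun a b => e.symm.injective (by rw [map_mul, map_mul, mul_comm'])
  refine Subgroup.topologicalClosure_minimal _ ?_ hmax.1
  calc commutator (G₁ × G₂) = (commutator G₁).prod (commutator G₂) := commutator_prod G₁ G₂
    _ ≤ H.goursatFst.prod H.goursatSnd := Subgroup.prod_mono hc₁ hc₂
    _ ≤ H := H.goursatFst_prod_goursatSnd_le

/-- If `H` is a maximal closed subgroup of `G₁ × G₂` surjecting onto both factors, and
`G₁`, `G₂` have no common finite nonabelian simple continuous quotient, then `H` contains
the closed commutator subgroup of `G₁ × G₂`. -/
theorem closed_commutator_le_of_maximal_closed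
    {G₁ G₂ : Type*} [Group G₁] [TopologicalSpace G₁] [IsTopologicalGroup G₁]
    [CompactSpace G₁] [T2Space G₁] [TotallyDisconnectedSpace G₁]
    [Group G₂] [TopologicalSpace G₂] [IsTopologicalGroup G₂]
    [CompactSpace G₂] [T2Space G₂] [TotallyDisconnectedSpace G₂]
    (H : Subgroup (G₁ × G₂)) (hmax : IsMaximalClosedSubgroup H)
    (h₁ : Subgroup.map (MonoidHom.fst G₁ G₂) H = ⊤)
    (h₂ : Subgroup.map (MonoidHom.snd G₁ G₂) H = ⊤)
    (hdisj : ∀ (S : Type) [Group S] [Finite S] [TopologicalSpace S] [DiscreteTopology S],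
      IsSimpleGroup S → (¬ ∀ a b : S, a * b = b * a) →
      ¬ ((∃ f : G₁ →* S, Continuous f ∧ Function.Surjective f) ∧
         (∃ f : G₂ →* S, Continuous f ∧ Function.Surjective f))) :
    (commutator (G₁ × G₂)).topologicalClosure ≤ H :=
  closed_commutator_le_of_maximal_closed_general H hmax h₁ h₂ hdisj
end

section
/- The map (sgn, det) : GL₂(ℤ₂) → {±1} × ℤ₂^× is surjective, and the closed commutator subgroup of GL₂(ℤ₂) equals its kernel, i.e. GL₂(ℤ₂)' = ker(sgn) ∩ SL₂(ℤ₂). -/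
/-!
The kernel is closed since `sgn2` factors through the discrete group `GL₂(𝔽₂)` and `det` is
continuous, so it suffices to show that it equals the abstract commutator subgroup. An element of
`SL₂(ℤ₂)` that is `1` mod 2 factors as `lower (2 s) * diag a a⁻¹ * upper (2 t)`, and each factor is
a commutator: `upper (2 x) = ⁅diag (-1) 1, upper (-x)⁆`, similarly for `lower`, and
`diag a a⁻¹ = ⁅diag a 1, S⁆`. Modulo 2, `ker sgn = A₃` is generated by the reduction of the
commutator `⁅S, upper 1⁆`, and multiplying by its powers reduces the general case to that one.
-/

open Matrix

/-- The permutation of vectors induced by an invertible matrix. -/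
def glToPerm {R : Type*} [CommRing R] (g : GL (Fin 2) R) : Equiv.Perm (Fin 2 → R) where
  toFun v := g.val.mulVec v
  invFun v := (g⁻¹).val.mulVec v
  left_inv v := by
    simp only [Matrix.mulVec_mulVec, ← Units.val_mul, inv_mul_cancel, Units.val_one,
      Matrix.one_mulVec]
  right_inv v := by
    simp only [Matrix.mulVec_mulVec, ← Units.val_mul, mul_inv_cancel, Units.val_one,
      Matrix.one_mulVec]

def glPermHom (R : Type*) [CommRing R] : GL (Fin 2) R →* Equiv.Perm (Fin 2 → R) where
  toFun := glToPerm
  map_one' := by ext v; simp [glToPerm]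
  map_mul' g h := by
    ext v; simp only [glToPerm, Equiv.Perm.coe_mul, Function.comp_apply, Equiv.coe_fn_mk,
      Units.val_mul, Matrix.mulVec_mulVec]

/-- The sign character on `GL₂(𝔽₂) ≅ S₃`, via the permutation action on `𝔽₂²`
(the zero vector being a fixed point). -/
noncomputable def sgnF2 : GL (Fin 2) (ZMod 2) →* ℤˣ :=
  Equiv.Perm.sign.comp (glPermHom (ZMod 2))

/-- The sign map on `GL₂(ℤ₂)`: reduction mod 2 followed by the sign character. -/
noncomputable def sgn2 : GL (Fin 2) ℤ_[2] →* ℤˣ :=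
  sgnF2.comp (Matrix.GeneralLinearGroup.map (PadicInt.toZMod (p := 2)))

open PadicInt
open scoped commutatorElement

theorem commutatorElement_mem_commutator {G : Type*} [Group G] (g h : G) :
    ⁅g, h⁆ ∈ commutator G :=
  Subgroup.commutator_mem_commutator (Subgroup.mem_top g) (Subgroup.mem_top h)

namespace GL2

variable {R : Type*} [CommRing R]

def diag (u v : Rˣ) : GL (Fin 2) R :=
  ⟨!![u, 0; 0, v], !![↑u⁻¹, 0; 0, ↑v⁻¹], by simp [one_fin_two], by simp [one_fin_two]⟩

def upper (x : R) : GL (Fin 2) R :=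
  ⟨!![1, x; 0, 1], !![1, -x; 0, 1], by simp [one_fin_two], by simp [one_fin_two]⟩

def lower (x : R) : GL (Fin 2) R :=
  ⟨!![1, 0; x, 1], !![1, 0; -x, 1], by simp [one_fin_two], by simp [one_fin_two]⟩

def S : GL (Fin 2) R :=
  ⟨!![0, -1; 1, 0], !![0, 1; -1, 0], by simp [one_fin_two], by simp [one_fin_two]⟩

theorem det_diag (u v : Rˣ) : GeneralLinearGroup.det (diag u v) = u * v := by
  ext
  simp [diag]

theorem det_upper (x : R) : GeneralLinearGroup.det (upper x) = 1 := by
  ext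
  simp [upper]

theorem commutatorElement_diag_upper (x : R) : ⁅diag (-1 : Rˣ) 1, upper (-x)⁆ = upper (2 * x) := by
  ext i j
  fin_cases i <;> fin_cases j <;> simp [commutatorElement_def, diag, upper]
  ring

theorem commutatorElement_diag_lower (x : R) : ⁅diag (-1 : Rˣ) 1, lower (-x)⁆ = lower (2 * x) := by
  ext i j
  fin_cases i <;> fin_cases j <;> simp [commutatorElement_def, diag, lower]
  ring

theorem commutatorElement_diag_S (u : Rˣ) : ⁅diag u 1, S⁆ = diag u u⁻¹ := by
  ext i j
  fin_cases i <;> fin_cases j <;> simp [commutatorElement_def, diag, S]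

theorem val_commutatorElement_S_upper :
    (⁅(S : GL (Fin 2) R), (upper 1 : GL (Fin 2) R)⁆ : GL (Fin 2) R).val = !![1, -1; -1, 2] := by
  ext i j
  fin_cases i <;> fin_cases j <;> simp [commutatorElement_def, S, upper]
  ring

theorem eq_lower_mul_diag_mul_upper (g : GL (Fin 2) R) (hdet : g.val.det = 1) (a : Rˣ)
    (ha : g 0 0 = a) : g = lower (g 1 0 * ↑a⁻¹) * diag a a⁻¹ * upper (↑a⁻¹ * g 0 1) := by
  rw [det_fin_two, ha] at hdet
  ext i j
  fin_cases i <;> fin_cases j <;> simp [diag, lower, upper, ha]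
  linear_combination (↑a⁻¹ : R) * hdet - g 1 1 * a.mul_inv

theorem mem_commutator_of_det_eq_one {g : GL (Fin 2) R} (hdet : g.val.det = 1)
    (h00 : IsUnit (g 0 0)) (h01 : 2 ∣ g 0 1) (h10 : 2 ∣ g 1 0) :
    g ∈ commutator (GL (Fin 2) R) := by
  obtain ⟨a, ha⟩ := h00
  obtain ⟨b, hb⟩ := h01
  obtain ⟨c, hc⟩ := h10
  rw [eq_lower_mul_diag_mul_upper g hdet a ha.symm, hb, hc, mul_assoc (2 : R),
    mul_left_comm _ (2 : R), ← commutatorElement_diag_lower, ← commutatorElement_diag_S,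
    ← commutatorElement_diag_upper]
  exact mul_mem (mul_mem (commutatorElement_mem_commutator _ _)
    (commutatorElement_mem_commutator _ _)) (commutatorElement_mem_commutator _ _)

end GL2

namespace PadicInt

variable {p : ℕ} [Fact p.Prime]

theorem continuous_toZMod : Continuous (toZMod : ℤ_[p] → ZMod p) := by
  refine continuous_iff_continuousAt.2 fun x => ?_
  rw [ContinuousAt, nhds_discrete (ZMod p), Filter.tendsto_pure]
  filter_upwards [Metric.ball_mem_nhds x one_pos] with y hy
  rw [← sub_eq_zero, ← map_sub, ← RingHom.mem_ker, ker_toZMod, IsLocalRing.mem_maximalIdeal,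
    mem_nonunits]
  simpa [dist_eq_norm] using hy

theorem toZMod_eq_zero_iff_dvd (z : ℤ_[p]) : toZMod z = 0 ↔ (p : ℤ_[p]) ∣ z := by
  rw [← RingHom.mem_ker, ker_toZMod, maximalIdeal_eq_span_p, Ideal.mem_span_singleton]

theorem isUnit_iff_toZMod_ne_zero (z : ℤ_[p]) : IsUnit z ↔ toZMod z ≠ 0 := by
  rw [← IsLocalRing.notMem_maximalIdeal, ← ker_toZMod, RingHom.mem_ker]

theorem toZMod_units_two_eq_one (u : ℤ_[2]ˣ) : toZMod (u : ℤ_[2]) = 1 := by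
  have := (isUnit_iff_toZMod_ne_zero _).1 u.isUnit
  revert this
  generalize toZMod (u : ℤ_[2]) = x
  decide +revert

end PadicInt

theorem Matrix.GeneralLinearGroup.continuous_map_toZMod {n : Type*} [Fintype n] [DecidableEq n]
    {p : ℕ} [Fact p.Prime] : Continuous (GeneralLinearGroup.map (n := n) (toZMod (p := p))) :=
  Units.continuous_map (continuous_id.matrix_map continuous_toZMod)

local notation "π₂" => Matrix.GeneralLinearGroup.map (PadicInt.toZMod (p := 2))

theorem sgnF2_eq_neg_one_of_val_eq_transvection (m : GL (Fin 2) (ZMod 2))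
    (hm : m.val = !![1, 1; 0, 1]) : sgnF2 m = -1 := by
  revert m
  decide

/-- `!![1, 1; 1, 0]` acts on `𝔽₂² \ {0}` as a 3-cycle, so this says that it generates
`ker sgnF2 = A₃`. -/
theorem exists_mul_pow_eq_one_of_sgnF2_eq_one (m : GL (Fin 2) (ZMod 2)) (hm : sgnF2 m = 1) :
    ∃ k < 3, m.val * !![1, 1; 1, 0] ^ k = 1 := by
  revert m
  decide

theorem continuous_sgn2 : Continuous sgn2 :=
  (continuous_of_discreteTopology (f := sgnF2)).comp GeneralLinearGroup.continuous_map_toZMod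

theorem isClosed_ker_sgn2_prod_det :
    IsClosed ((sgn2.prod GeneralLinearGroup.det).ker : Set (GL (Fin 2) ℤ_[2])) := by
  rw [MonoidHom.coe_ker]
  exact isClosed_singleton.preimage (continuous_sgn2.prodMk (by fun_prop))

theorem sgn2_diag_one (u : ℤ_[2]ˣ) : sgn2 (GL2.diag u 1) = 1 := by
  have : π₂ (GL2.diag u 1) = 1 := by
    ext i j
    fin_cases i <;> fin_cases j <;> simp [GL2.diag, toZMod_units_two_eq_one]
  rw [sgn2, MonoidHom.comp_apply, this, map_one]

theorem sgn2_upper_one : sgn2 (GL2.upper 1) = -1 :=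
  sgnF2_eq_neg_one_of_val_eq_transvection _ <| by
    ext i j
    fin_cases i <;> fin_cases j <;> simp [GL2.upper]

theorem surjective_sgn2_prod_det :
    Function.Surjective (sgn2.prod (GeneralLinearGroup.det : GL (Fin 2) ℤ_[2] →* ℤ_[2]ˣ)) := by
  rintro ⟨ε, u⟩
  rcases Int.units_eq_one_or ε with rfl | rfl
  · exact ⟨GL2.diag u 1, by simp [sgn2_diag_one, GL2.det_diag]⟩
  · exact ⟨GL2.diag u 1 * GL2.upper 1,
      by simp [sgn2_diag_one, sgn2_upper_one, GL2.det_diag, GL2.det_upper]⟩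

theorem val_map_commutatorElement_S_upper :
    (π₂ ⁅(GL2.S : GL (Fin 2) ℤ_[2]), GL2.upper 1⁆).val = !![1, 1; 1, 0] := by
  ext i j
  rw [GeneralLinearGroup.map_apply, GL2.val_commutatorElement_S_upper]
  fin_cases i <;> fin_cases j <;> simp [map_ofNat]
  rfl

theorem mem_commutator_of_map_eq_one {g : GL (Fin 2) ℤ_[2]} (hdet : GeneralLinearGroup.det g = 1)
    (hg : π₂ g = 1) : g ∈ commutator (GL (Fin 2) ℤ_[2]) := by
  have entry (i j : Fin 2) : toZMod (g i j) = (1 : Matrix (Fin 2) (Fin 2) (ZMod 2)) i j := by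
    rw [← GeneralLinearGroup.map_apply, hg]
    rfl
  refine GL2.mem_commutator_of_det_eq_one ?_ ?_ ?_ ?_
  · simpa [Units.ext_iff] using hdet
  · rw [isUnit_iff_toZMod_ne_zero, entry]
    decide
  · exact_mod_cast (toZMod_eq_zero_iff_dvd _).1 (entry 0 1)
  · exact_mod_cast (toZMod_eq_zero_iff_dvd _).1 (entry 1 0)

theorem commutator_eq_ker_sgn2_prod_det :
    commutator (GL (Fin 2) ℤ_[2]) = (sgn2.prod GeneralLinearGroup.det).ker := by
  refine le_antisymm (Abelianization.commutator_subset_ker _) fun g hg => ?_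
  obtain ⟨hsgn, hdet⟩ : sgn2 g = 1 ∧ GeneralLinearGroup.det g = 1 := by
    simpa only [MonoidHom.mem_ker, MonoidHom.prod_apply, Prod.mk_eq_one] using hg
  set H : GL (Fin 2) ℤ_[2] := ⁅(GL2.S : GL (Fin 2) ℤ_[2]), GL2.upper 1⁆
  have hH : H ∈ commutator (GL (Fin 2) ℤ_[2]) := commutatorElement_mem_commutator _ _
  obtain ⟨k, -, hk⟩ := exists_mul_pow_eq_one_of_sgnF2_eq_one (π₂ g) hsgn
  have hgH : g * H ^ k ∈ commutator (GL (Fin 2) ℤ_[2]) := by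
    refine mem_commutator_of_map_eq_one ?_ ?_
    · rw [map_mul, map_pow, hdet, Abelianization.commutator_subset_ker _ hH, one_pow, one_mul]
    · ext : 1
      rw [map_mul, map_pow, Units.val_mul, Units.val_pow_eq_pow_val,
        val_map_commutatorElement_S_upper, hk, Units.val_one]
  simpa using mul_mem hgH (inv_mem (pow_mem hH k))

/-- `(sgn, det) : GL₂(ℤ₂) → {±1} × ℤ₂ˣ` is surjective and its kernel is the closed
commutator subgroup of `GL₂(ℤ₂)`. -/
theorem sgn_det_GL2_Z2 :
    Function.Surjective
      ⇑(sgn2.prod (Matrix.GeneralLinearGroup.det : GL (Fin 2) ℤ_[2] →* ℤ_[2]ˣ)) ∧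
    (commutator (GL (Fin 2) ℤ_[2])).topologicalClosure =
      (sgn2.prod (Matrix.GeneralLinearGroup.det : GL (Fin 2) ℤ_[2] →* ℤ_[2]ˣ)).ker := by
  refine ⟨surjective_sgn2_prod_det, ?_⟩
  rw [commutator_eq_ker_sgn2_prod_det]
  exact le_antisymm (Subgroup.topologicalClosure_minimal _ le_rfl isClosed_ker_sgn2_prod_det)
    (Subgroup.le_topologicalClosure _)
end

section
/- Let ℓ be an odd prime and U a closed subgroup of V_ℓ = I + ℓ·M₂(ℤ_ℓ) ⊆ GL₂(ℤ_ℓ). If U surjects onto V_ℓ/V_{ℓ²}, then U = V_ℓ. -/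
/-!
Every `x ∈ V_ℓ` is a limit of elements of `U`, so `x ∈ U` as `U` is closed. The approximations
are built one level at a time: if `u ∈ U` agrees with `x` modulo `ℓ^(m+2)`, write
`u⁻¹x = 1 + ℓ^(m+2) A` and lift `1 + ℓ^(m+1) A ∈ V_ℓ` modulo `ℓ^(m+2)` to some `v ∈ U`. Since `ℓ`
is odd, the binomial theorem gives `v^ℓ ≡ 1 + ℓ^(m+2) A` modulo `ℓ^(m+3)`, so `u v^ℓ ∈ U` agrees
with `x` modulo `ℓ^(m+3)`.
-/

open Matrix Filter Topology

open Finset in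
theorem one_add_prime_pow_mul_pow_prime {R : Type*} [Ring R] {p n : ℕ} (hp : p.Prime)
    (hodd : p ≠ 2) (hR : (p : R) ^ (n + 3) = 0) (a : R) :
    (1 + (p : R) ^ (n + 1) * a) ^ p = 1 + (p : R) ^ (n + 2) * a := by
  set x := (p : R) ^ (n + 1) * a
  have hpow (k : ℕ) : x ^ k = (p : R) ^ ((n + 1) * k) * a ^ k := by
    rw [((Nat.cast_commute p a).pow_left (n + 1)).mul_pow, pow_mul]
  have hx3 : x ^ 3 = 0 := by
    rw [hpow, pow_eq_zero_of_le (by omega) hR, zero_mul]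
  have hx2p : x ^ 2 * p = 0 := by
    rw [hpow, mul_assoc, ← (Nat.cast_commute p _).eq, ← mul_assoc, ← pow_succ,
      pow_eq_zero_of_le (by omega) hR, zero_mul]
  obtain ⟨q, rfl⟩ : ∃ q, p = q + 3 := ⟨p - 3, by have := hp.two_le; omega⟩
  -- binomial terms of degree `≥ 2` vanish: `x ^ 3 = 0`, and `p ∣ choose p k` for `1 < k < p`
  have hhigh : ∀ k ∈ range (q + 2),
      x ^ (k + 2) * 1 ^ (q + 3 - (k + 2)) * ((q + 3).choose (k + 2) : R) = 0 := by
    intro k hk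
    rw [one_pow, mul_one]
    rcases (Nat.lt_succ_iff.1 (mem_range.1 hk)).lt_or_eq with hkq | rfl
    · obtain ⟨t, ht⟩ := hp.dvd_choose_self (by omega : k + 2 ≠ 0) (by omega : k + 2 < q + 3)
      rw [ht, Nat.cast_mul, pow_add, mul_assoc, ← mul_assoc (x ^ 2), hx2p, zero_mul, mul_zero]
    · rw [pow_eq_zero_of_le (by omega) hx3, zero_mul]
  rw [add_comm, (Commute.one_right x).add_pow, sum_range_succ', sum_range_succ',
    sum_eq_zero hhigh]
  simp only [zero_add, pow_one, one_pow, mul_one, pow_zero, Nat.choose_one_right,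
    Nat.choose_zero_right, Nat.cast_one]
  rw [add_comm, mul_assoc, ← (Nat.cast_commute _ _).eq, ← mul_assoc, ← pow_succ]

theorem Matrix.natCast_zmod_self {ι : Type*} [DecidableEq ι] (k : ℕ) :
    (k : Matrix ι ι (ZMod k)) = 0 := by
  rw [← diagonal_natCast, ZMod.natCast_self, diagonal_zero]

namespace PadicInt

variable {ℓ : ℕ} [Fact ℓ.Prime] {ι : Type*} [Fintype ι] [DecidableEq ι]

theorem tendsto_of_toZModPow_eq {a : ℕ → ℤ_[ℓ]} {b : ℤ_[ℓ]}
    (h : ∀ n, toZModPow n (a n) = toZModPow n b) : Tendsto a atTop (𝓝 b) := by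
  have hℓ : (1 : ℝ) < ℓ := by exact_mod_cast (Fact.out : ℓ.Prime).one_lt
  have hbound (n : ℕ) : ‖a n - b‖ ≤ (ℓ⁻¹ : ℝ) ^ n := by
    rw [inv_pow, ← zpow_natCast, ← _root_.zpow_neg, norm_le_pow_iff_mem_span_pow,
      ← ker_toZModPow, RingHom.mem_ker, map_sub, h, sub_self]
  rw [tendsto_iff_norm_sub_tendsto_zero]
  exact squeeze_zero (fun _ => norm_nonneg _) hbound
    (tendsto_pow_atTop_nhds_zero_of_lt_one (by positivity) (inv_lt_one_of_one_lt₀ hℓ))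

theorem mapMatrix_toZModPow_eq_iff {k : ℕ} {X Y : Matrix ι ι ℤ_[ℓ]} :
    (toZModPow k).mapMatrix X = (toZModPow k).mapMatrix Y ↔
      ∃ B, X = Y + (ℓ : Matrix ι ι ℤ_[ℓ]) ^ k * B := by
  have hentry (z : ℤ_[ℓ]) : toZModPow k z = 0 ↔ ∃ c, z = (ℓ : ℤ_[ℓ]) ^ k * c := by
    rw [← RingHom.mem_ker, ker_toZModPow, Ideal.mem_span_singleton]
    rfl
  rw [← sub_eq_zero, ← map_sub]
  simp_rw [← sub_eq_iff_eq_add', ← Nat.cast_pow, ← nsmul_eq_mul]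
  constructor
  · intro h
    choose B hB using fun i j => (hentry _).1 (congrFun (congrFun h i) j)
    exact ⟨Matrix.of B, by
      ext i j
      rw [hB, Matrix.smul_apply, of_apply, nsmul_eq_mul, Nat.cast_pow]⟩
  · rintro ⟨B, hB⟩
    rw [hB, map_nsmul, nsmul_eq_mul, natCast_zmod_self, zero_mul]

theorem isUnit_one_add_natCast_mul (A : Matrix ι ι ℤ_[ℓ]) :
    IsUnit (1 + (ℓ : Matrix ι ι ℤ_[ℓ]) * A) := by
  have hred : toZMod.mapMatrix (1 + (ℓ : Matrix ι ι ℤ_[ℓ]) * A) = 1 := by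
    rw [map_add, map_one, map_mul, map_natCast, natCast_zmod_self, zero_mul, add_zero]
  rw [isUnit_iff_isUnit_det, ← mem_nonunits_iff.not_left, ← IsLocalRing.mem_maximalIdeal,
    ← ker_toZMod, RingHom.mem_ker, RingHom.map_det, hred, det_one]
  exact one_ne_zero

theorem tendsto_of_map_toZModPow_eq {u : ℕ → GL ι ℤ_[ℓ]} {x : GL ι ℤ_[ℓ]}
    (h : ∀ n, GeneralLinearGroup.map (toZModPow n) (u n) =
      GeneralLinearGroup.map (toZModPow n) x) :
    Tendsto u atTop (𝓝 x) := by
  have hmat {M : ℕ → Matrix ι ι ℤ_[ℓ]} {L : Matrix ι ι ℤ_[ℓ]}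
      (hML : ∀ n, (toZModPow n).mapMatrix (M n) = (toZModPow n).mapMatrix L) :
      Tendsto M atTop (𝓝 L) :=
    tendsto_pi_nhds.2 fun i => tendsto_pi_nhds.2 fun j =>
      tendsto_of_toZModPow_eq fun n => congrFun (congrFun (hML n) i) j
  have hinv (n : ℕ) : GeneralLinearGroup.map (toZModPow n) (u n)⁻¹ =
      GeneralLinearGroup.map (toZModPow n) x⁻¹ := by
    rw [map_inv, map_inv, h]
  rw [Units.isInducing_embedProduct.tendsto_nhds_iff]
  exact (hmat fun n => congrArg Units.val (h n)).prodMk_nhds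
    ((MulOpposite.continuous_op.tendsto _).comp (hmat fun n => congrArg Units.val (hinv n)))

theorem map_toZModPow_eq_of_le {m n : ℕ} (hmn : m ≤ n) {g h : GL ι ℤ_[ℓ]}
    (hgh : GeneralLinearGroup.map (toZModPow n) g = GeneralLinearGroup.map (toZModPow n) h) :
    GeneralLinearGroup.map (toZModPow m) g = GeneralLinearGroup.map (toZModPow m) h := by
  rw [← zmod_cast_comp_toZModPow m n hmn, GeneralLinearGroup.map_comp, MonoidHom.comp_apply,
    MonoidHom.comp_apply, hgh]

theorem mapMatrix_toZModPow_pow_prime (hodd : ℓ ≠ 2) (m : ℕ) (A B : Matrix ι ι ℤ_[ℓ]) :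
    (toZModPow (m + 3)).mapMatrix
        ((1 + (ℓ : Matrix ι ι ℤ_[ℓ]) ^ (m + 1) * A + (ℓ : Matrix ι ι ℤ_[ℓ]) ^ (m + 2) * B) ^ ℓ) =
      (toZModPow (m + 3)).mapMatrix (1 + (ℓ : Matrix ι ι ℤ_[ℓ]) ^ (m + 2) * A) := by
  simp only [map_add, map_one, map_mul, map_pow, map_natCast]
  set p : Matrix ι ι (ZMod (ℓ ^ (m + 3))) := (ℓ : Matrix ι ι (ZMod (ℓ ^ (m + 3))))
  set a := (toZModPow (m + 3)).mapMatrix A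
  set b := (toZModPow (m + 3)).mapMatrix B
  have hp : p ^ (m + 3) = 0 := by
    rw [← Nat.cast_pow]
    exact natCast_zmod_self _
  have hab : 1 + p ^ (m + 1) * a + p ^ (m + 2) * b = 1 + p ^ (m + 1) * (a + p * b) := by
    rw [mul_add, ← mul_assoc, ← pow_succ, add_assoc]
  rw [hab, one_add_prime_pow_mul_pow_prime Fact.out hodd hp, mul_add, ← mul_assoc, ← pow_succ, hp,
    zero_mul, add_zero]

theorem exists_mem_map_toZModPow_eq_succ (hodd : ℓ ≠ 2) {U : Subgroup (GL ι ℤ_[ℓ])} {m : ℕ}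
    (h : ∀ y ∈ (GeneralLinearGroup.map (toZModPow 1)).ker, ∃ u ∈ U,
      GeneralLinearGroup.map (toZModPow (m + 2)) u = GeneralLinearGroup.map (toZModPow (m + 2)) y)
    {x : GL ι ℤ_[ℓ]} (hx : x ∈ (GeneralLinearGroup.map (toZModPow 1)).ker) :
    ∃ w ∈ U, GeneralLinearGroup.map (toZModPow (m + 3)) w =
      GeneralLinearGroup.map (toZModPow (m + 3)) x := by
  obtain ⟨u, hu, hux⟩ := h x hx
  have hux' : GeneralLinearGroup.map (toZModPow (m + 2)) (u⁻¹ * x) =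
      GeneralLinearGroup.map (toZModPow (m + 2)) 1 := by
    rw [map_mul, map_inv, hux, inv_mul_cancel, map_one]
  obtain ⟨A, hA⟩ := mapMatrix_toZModPow_eq_iff.1 (congrArg Units.val hux')
  obtain ⟨W, hW⟩ : ∃ W : GL ι ℤ_[ℓ], (W : Matrix ι ι ℤ_[ℓ]) = 1 + ℓ ^ (m + 1) * A := by
    rw [pow_succ', mul_assoc]
    exact ⟨_, (isUnit_one_add_natCast_mul _).unit_spec⟩
  have hW1 : W ∈ (GeneralLinearGroup.map (toZModPow 1)).ker := by
    rw [MonoidHom.mem_ker, ← map_one (GeneralLinearGroup.map (toZModPow 1))]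
    refine Units.ext (mapMatrix_toZModPow_eq_iff.2 ⟨ℓ ^ m * A, ?_⟩)
    rw [hW, Units.val_one, pow_one, pow_succ', mul_assoc]
  obtain ⟨v, hv, hvW⟩ := h W hW1
  obtain ⟨B, hB⟩ := mapMatrix_toZModPow_eq_iff.1 (congrArg Units.val hvW)
  refine ⟨u * v ^ ℓ, U.mul_mem hu (U.pow_mem hv ℓ), ?_⟩
  suffices GeneralLinearGroup.map (toZModPow (m + 3)) (v ^ ℓ) =
      GeneralLinearGroup.map (toZModPow (m + 3)) (u⁻¹ * x) by
    rw [map_mul, this, map_mul, map_inv, mul_inv_cancel_left]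
  refine Units.ext ?_
  change (toZModPow (m + 3)).mapMatrix ((v : Matrix ι ι ℤ_[ℓ]) ^ ℓ) =
    (toZModPow (m + 3)).mapMatrix ((u⁻¹ * x : GL ι ℤ_[ℓ]) : Matrix ι ι ℤ_[ℓ])
  rw [hB, hW, hA, Units.val_one]
  exact mapMatrix_toZModPow_pow_prime hodd m A B

theorem exists_mem_map_toZModPow_eq (hodd : ℓ ≠ 2) {U : Subgroup (GL ι ℤ_[ℓ])}
    (hsurj : (GeneralLinearGroup.map (toZModPow 1)).ker.map (GeneralLinearGroup.map (toZModPow 2))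
      ≤ U.map (GeneralLinearGroup.map (toZModPow 2)))
    {x : GL ι ℤ_[ℓ]} (hx : x ∈ (GeneralLinearGroup.map (toZModPow 1)).ker) (n : ℕ) :
    ∃ u ∈ U, GeneralLinearGroup.map (toZModPow n) u = GeneralLinearGroup.map (toZModPow n) x := by
  have hlift (m : ℕ) : ∀ y ∈ (GeneralLinearGroup.map (toZModPow 1)).ker, ∃ u ∈ U,
      GeneralLinearGroup.map (toZModPow (m + 2)) u =
        GeneralLinearGroup.map (toZModPow (m + 2)) y := by
    induction m with
    | zero => exact fun y hy => hsurj ⟨y, hy, rfl⟩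
    | succ m ih => exact fun y hy => exists_mem_map_toZModPow_eq_succ hodd ih hy
  obtain ⟨u, hu, hux⟩ := hlift n x hx
  exact ⟨u, hu, map_toZModPow_eq_of_le (by omega) hux⟩

end PadicInt

/-- For an odd prime `ℓ`, a closed subgroup `U` of `V_ℓ = I + ℓM₂(ℤ_ℓ)` (the kernel of
reduction mod `ℓ`) which surjects onto `V_ℓ/V_{ℓ²}` (i.e. has the same image mod `ℓ²`
as `V_ℓ`) equals `V_ℓ`. -/
theorem closed_subgroup_of_Vl (ℓ : ℕ) [Fact (Nat.Prime ℓ)] (hodd : ℓ ≠ 2)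
    (U : Subgroup (GL (Fin 2) ℤ_[ℓ])) (hclosed : IsClosed (U : Set (GL (Fin 2) ℤ_[ℓ])))
    (hle : U ≤ (Matrix.GeneralLinearGroup.map
      (PadicInt.toZModPow 1 : ℤ_[ℓ] →+* ZMod (ℓ ^ 1))).ker)
    (hsurj : Subgroup.map
        (Matrix.GeneralLinearGroup.map (PadicInt.toZModPow 2 : ℤ_[ℓ] →+* ZMod (ℓ ^ 2))) U =
      Subgroup.map
        (Matrix.GeneralLinearGroup.map (PadicInt.toZModPow 2 : ℤ_[ℓ] →+* ZMod (ℓ ^ 2)))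
        (Matrix.GeneralLinearGroup.map
          (PadicInt.toZModPow 1 : ℤ_[ℓ] →+* ZMod (ℓ ^ 1))).ker) :
    U = (Matrix.GeneralLinearGroup.map
      (PadicInt.toZModPow 1 : ℤ_[ℓ] →+* ZMod (ℓ ^ 1))).ker := by
  refine le_antisymm hle fun x hx => ?_
  choose u hu hux using PadicInt.exists_mem_map_toZModPow_eq hodd hsurj.ge hx
  exact hclosed.mem_of_tendsto (PadicInt.tendsto_of_map_toZModPow_eq hux) (.of_forall hu)
end

section
/- Let H be a closed subgroup of GL₂(ℤ₂). If H surjects onto GL₂(ℤ/8ℤ), then H = GL₂(ℤ₂). -/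
/-!
Suppose `H` has full image modulo `2^m` for some `m ≥ 3`. Every `x ≡ 1 (mod 2^m)` is, modulo
`2^(m+1)`, the square of an element of `H`: write `x = 1 + 2^m X` and choose `k ∈ H` with
`k ≡ 1 + 2^(m-1) X (mod 2^m)`; then `k² ≡ 1 + 2^m X (mod 2^(m+1))` because `2(m-1) ≥ m+1`.
Hence `H` has full image modulo every `2^m`, so it is dense, and being closed it is everything.
-/

open Matrix Filter Topology PadicInt

theorem one_add_two_pow_smul_add_sq {R A : Type*} [CommRing R] [Ring A] [Algebra R A]
    (X Z : A) (i : ℕ) :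
    (1 + (2 : R) ^ (i + 2) • X + (2 : R) ^ (i + 3) • Z) ^ 2 =
      1 + (2 : R) ^ (i + 3) • X +
        (2 : R) ^ (i + 4) • (Z + (2 : R) ^ i • (X + (2 : R) • Z) ^ 2) := by
  simp only [sq, add_mul, mul_add, smul_mul_assoc, mul_smul_comm, smul_smul, one_mul, mul_one,
    smul_add]
  module

namespace PadicInt

variable {p : ℕ} [Fact p.Prime]

theorem toZModPow_eq_iff {k : ℕ} {a b : ℤ_[p]} :
    toZModPow k a = toZModPow k b ↔ ∃ c, a = b + (p : ℤ_[p]) ^ k * c := by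
  rw [← sub_eq_zero, ← map_sub, ← RingHom.mem_ker, ker_toZModPow, Ideal.mem_span_singleton,
    dvd_def]
  simp only [sub_eq_iff_eq_add']

theorem tendsto_of_toZModPow_eq_s13 {e : ℕ → ℕ} (he : Tendsto e atTop atTop) {x : ℕ → ℤ_[p]}
    {y : ℤ_[p]} (hx : ∀ k, toZModPow (e k) (x k) = toZModPow (e k) y) :
    Tendsto x atTop (𝓝 y) := by
  have hp : (1 : ℝ) < p := mod_cast (Fact.out : p.Prime).one_lt
  have hdist k : dist (x k) y ≤ ((p : ℝ)⁻¹) ^ e k := by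
    rw [dist_eq_norm, inv_pow, ← zpow_natCast, ← _root_.zpow_neg, norm_le_pow_iff_mem_span_pow,
      ← ker_toZModPow, RingHom.mem_ker, map_sub, hx k, sub_self]
  refine tendsto_iff_dist_tendsto_zero.2 (squeeze_zero (fun _ => dist_nonneg) hdist ?_)
  exact (tendsto_pow_atTop_nhds_zero_of_lt_one (by positivity) (inv_lt_one_of_one_lt₀ hp)).comp he

end PadicInt

namespace Matrix

variable {m n : Type*}

theorem map_toZModPow_eq_iff {p : ℕ} [Fact p.Prime] {k : ℕ} {A B : Matrix m n ℤ_[p]} :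
    A.map (toZModPow k) = B.map (toZModPow k) ↔ ∃ C, A = B + (p : ℤ_[p]) ^ k • C := by
  refine Matrix.ext_iff.symm.trans ?_
  simp only [map_apply, toZModPow_eq_iff]
  constructor
  · intro h
    choose C hC using h
    exact ⟨Matrix.of C, Matrix.ext fun i j => by simpa using hC i j⟩
  · rintro ⟨C, rfl⟩ i j
    exact ⟨C i j, by simp⟩

theorem tendsto_of_map_toZModPow_eq {p : ℕ} [Fact p.Prime] {e : ℕ → ℕ}
    (he : Tendsto e atTop atTop) {A : ℕ → Matrix m n ℤ_[p]} {B : Matrix m n ℤ_[p]}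
    (hA : ∀ k, (A k).map (toZModPow (e k)) = B.map (toZModPow (e k))) :
    Tendsto A atTop (𝓝 B) :=
  tendsto_pi_nhds.2 fun i => tendsto_pi_nhds.2 fun j =>
    PadicInt.tendsto_of_toZModPow_eq_s13 he fun k => congrFun (congrFun (hA k) i) j

theorem isUnit_one_add_smul [Fintype n] [DecidableEq n] {R : Type*} [CommRing R] [IsLocalRing R]
    {a : R} (ha : a ∈ IsLocalRing.maximalIdeal R) (X : Matrix n n R) : IsUnit (1 + a • X) := by
  have hres : (IsLocalRing.residue R).mapMatrix (1 + a • X) = 1 := by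
    rw [map_add, map_one, RingHom.mapMatrix_apply, Matrix.map_smul' _ _ _ (map_mul _),
      (IsLocalRing.residue_eq_zero_iff a).2 ha, zero_smul, add_zero]
  rw [isUnit_iff_isUnit_det, ← IsLocalRing.residue_ne_zero_iff_isUnit, RingHom.map_det, hres,
    det_one]
  exact one_ne_zero

end Matrix

namespace Matrix.GeneralLinearGroup

variable {n : Type*} [Fintype n] [DecidableEq n]

theorem map_toZModPow_eq_iff {p : ℕ} [Fact p.Prime] {k : ℕ} {g h : GL n ℤ_[p]} :
    map (toZModPow k) g = map (toZModPow k) h ↔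
      ∃ C, (g : Matrix n n ℤ_[p]) = h + (p : ℤ_[p]) ^ k • C :=
  Units.ext_iff.trans Matrix.map_toZModPow_eq_iff

theorem tendsto_of_map_toZModPow_eq {p : ℕ} [Fact p.Prime] {e : ℕ → ℕ}
    (he : Tendsto e atTop atTop) {g : ℕ → GL n ℤ_[p]} {g₀ : GL n ℤ_[p]}
    (hg : ∀ k, map (toZModPow (e k)) (g k) = map (toZModPow (e k)) g₀) :
    Tendsto g atTop (𝓝 g₀) := by
  have hinv k : map (toZModPow (e k)) (g k)⁻¹ = map (toZModPow (e k)) g₀⁻¹ := by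
    rw [map_inv, map_inv, hg k]
  rw [Units.isInducing_embedProduct.tendsto_nhds_iff]
  exact (Matrix.tendsto_of_map_toZModPow_eq he fun k => congrArg Units.val (hg k)).prodMk_nhds
    ((MulOpposite.continuous_op.tendsto _).comp
      (Matrix.tendsto_of_map_toZModPow_eq he fun k => congrArg Units.val (hinv k)))

theorem exists_sq_map_toZModPow_eq {H : Subgroup (GL n ℤ_[2])} {i : ℕ}
    (hH : H.map (map (toZModPow (i + 3))) = (map (toZModPow (i + 3))).range) {x : GL n ℤ_[2]}
    (hx : map (toZModPow (i + 3)) x = 1) :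
    ∃ k ∈ H, map (toZModPow (i + 4)) (k ^ 2) = map (toZModPow (i + 4)) x := by
  obtain ⟨X, hX⟩ : ∃ X, (x : Matrix n n ℤ_[2]) = 1 + (2 : ℤ_[2]) ^ (i + 3) • X := by
    simpa using map_toZModPow_eq_iff.1 (hx.trans (map_one _).symm)
  have h2 : (2 : ℤ_[2]) ^ (i + 2) ∈ IsLocalRing.maximalIdeal ℤ_[2] :=
    Ideal.pow_mem_of_mem _
      (by simpa using (IsLocalRing.mem_maximalIdeal _).2 (p_nonunit (p := 2))) _ (by omega)
  set y := (Matrix.isUnit_one_add_smul h2 X).unit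
  obtain ⟨k, hk, hky⟩ := hH.ge ⟨y, rfl⟩
  obtain ⟨Z, hZ⟩ : ∃ Z, (k : Matrix n n ℤ_[2]) =
      1 + (2 : ℤ_[2]) ^ (i + 2) • X + (2 : ℤ_[2]) ^ (i + 3) • Z := by
    simpa [y] using map_toZModPow_eq_iff.1 hky
  refine ⟨k, hk, map_toZModPow_eq_iff.2
    ⟨Z + (2 : ℤ_[2]) ^ i • (X + (2 : ℤ_[2]) • Z) ^ 2, ?_⟩⟩
  simp only [Units.val_pow_eq_pow_val, hZ, one_add_two_pow_smul_add_sq, hX, Nat.cast_ofNat]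

theorem map_toZModPow_succ_eq_range {H : Subgroup (GL n ℤ_[2])} {i : ℕ}
    (hH : H.map (map (toZModPow (i + 3))) = (map (toZModPow (i + 3))).range) :
    H.map (map (toZModPow (i + 4))) = (map (toZModPow (i + 4))).range := by
  refine le_antisymm (H.map_le_range _) ?_
  rintro _ ⟨g, rfl⟩
  obtain ⟨h, hh, hhg⟩ := hH.ge ⟨g, rfl⟩
  obtain ⟨k, hk, hk2⟩ := exists_sq_map_toZModPow_eq hH (x := h⁻¹ * g)
    (by rw [map_mul, map_inv, hhg, inv_mul_cancel])
  exact ⟨h * k ^ 2, H.mul_mem hh (H.pow_mem hk 2),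
    by rw [map_mul, hk2, ← map_mul, mul_inv_cancel_left]⟩

end Matrix.GeneralLinearGroup

/-- A closed subgroup of `GL₂(ℤ₂)` that surjects onto `GL₂(ℤ/8ℤ)` is all of `GL₂(ℤ₂)`. -/
theorem closed_subgroup_GL2_Z2_of_mod8 (H : Subgroup (GL (Fin 2) ℤ_[2]))
    (hclosed : IsClosed (H : Set (GL (Fin 2) ℤ_[2])))
    (hsurj : Subgroup.map
        (Matrix.GeneralLinearGroup.map (PadicInt.toZModPow 3 : ℤ_[2] →+* ZMod (2 ^ 3))) H
      = ⊤) :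
    H = ⊤ := by
  have hfull (k : ℕ) : H.map (GeneralLinearGroup.map (toZModPow (k + 3))) =
      (GeneralLinearGroup.map (toZModPow (k + 3))).range := by
    induction k with
    | zero => exact le_antisymm (H.map_le_range _) (hsurj ▸ le_top)
    | succ k ih => exact GeneralLinearGroup.map_toZModPow_succ_eq_range ih
  refine eq_top_iff.2 fun g _ => ?_
  choose h hH hg using fun k => (hfull k).ge ⟨g, rfl⟩
  exact hclosed.mem_of_tendsto
    (GeneralLinearGroup.tendsto_of_map_toZModPow_eq (tendsto_add_atTop_nat 3) hg) (.of_forall hH)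
end

section
/- If H is a subgroup of GL₂(ℤ/8ℤ) that surjects onto GL₂(ℤ/4ℤ) under reduction mod 4, then the index of H in GL₂(ℤ/8ℤ) is at most 2. -/
open Matrix

abbrev φ48 : ZMod 8 →+* ZMod 4 := ZMod.castHom (by norm_num : (4:ℕ) ∣ 8) (ZMod 4)

-- entry congruence helper
lemma cast_eq_cases (x y : ZMod 8) (h : φ48 x = φ48 y) : x = y ∨ x = y + 4 := by
  revert h; revert x y; decide

-- explicit involutive GL elements
def gl8 (M : Matrix (Fin 2) (Fin 2) (ZMod 8)) (h : M * M = 1) : GL (Fin 2) (ZMod 8) :=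
  ⟨M, M, h, h⟩

@[simp] lemma gl8_val (M h) : (gl8 M h).val = M := rfl

def c0 : GL (Fin 2) (ZMod 8) := gl8 !![5,0;0,1] (by decide)
def c1 : GL (Fin 2) (ZMod 8) := gl8 !![1,4;0,1] (by decide)
def c2 : GL (Fin 2) (ZMod 8) := gl8 !![1,0;4,1] (by decide)
def c3 : GL (Fin 2) (ZMod 8) := gl8 !![5,0;0,5] (by decide)

-- map applied entrywise
lemma map_val (g : GL (Fin 2) (ZMod 8)) :
    ((Matrix.GeneralLinearGroup.map φ48) g).val = g.val.map φ48 := rfl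

section
variable {n : Type*}

lemma four_mul_smul (U Y : Matrix (Fin 2) (Fin 2) (ZMod 8))
    (h : (4 : ZMod 8) • U = (4 : ZMod 8) • (1 : Matrix (Fin 2) (Fin 2) (ZMod 8))) :
    U * ((4 : ZMod 8) • Y) = (4 : ZMod 8) • Y := by
  rw [mul_smul_comm, ← smul_mul_assoc, h, smul_mul_assoc, one_mul]


lemma four_smul_mul (U Y : Matrix (Fin 2) (Fin 2) (ZMod 8))
    (h : (4 : ZMod 8) • U = (4 : ZMod 8) • (1 : Matrix (Fin 2) (Fin 2) (ZMod 8))) :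
    ((4 : ZMod 8) • Y) * U = (4 : ZMod 8) • Y := by
  rw [smul_mul_assoc, ← mul_smul_comm, h, mul_smul_comm, mul_one]


lemma comm_key (U V C A B : Matrix (Fin 2) (Fin 2) (ZMod 8))
    (h4U : (4 : ZMod 8) • U = (4 : ZMod 8) • (1 : Matrix (Fin 2) (Fin 2) (ZMod 8))) (h4V : (4 : ZMod 8) • V = (4 : ZMod 8) • (1 : Matrix (Fin 2) (Fin 2) (ZMod 8)))
    (h4C : (4 : ZMod 8) • C = (4 : ZMod 8) • (1 : Matrix (Fin 2) (Fin 2) (ZMod 8)))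
    (hUV : U * V = C * (V * U))
    (hA : ∀ i j, φ48 (A i j) = φ48 (U i j))
    (hB : ∀ i j, φ48 (B i j) = φ48 (V i j)) :
    A * B = C * (B * A) := by
  have hX : ∀ i j, ∃ t : ZMod 8, A i j = U i j + 4 * t := by
    intro i j
    rcases cast_eq_cases _ _ (hA i j) with h | h
    · exact ⟨0, by simp [h]⟩
    · exact ⟨1, by simp [h]⟩
  have hY : ∀ i j, ∃ t : ZMod 8, B i j = V i j + 4 * t := by
    intro i j
    rcases cast_eq_cases _ _ (hB i j) with h | h
    · exact ⟨0, by simp [h]⟩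
    · exact ⟨1, by simp [h]⟩
  choose X hXe using hX
  choose Y hYe using hY
  have hAe : A = U + (4 : ZMod 8) • Matrix.of X := by
    ext i j; simp [hXe i j, Matrix.smul_apply, smul_eq_mul]
  have hBe : B = V + (4 : ZMod 8) • Matrix.of Y := by
    ext i j; simp [hYe i j, Matrix.smul_apply, smul_eq_mul]
  set X' : Matrix (Fin 2) (Fin 2) (ZMod 8) := Matrix.of X
  set Y' : Matrix (Fin 2) (Fin 2) (ZMod 8) := Matrix.of Y
  have hzero : ((4:ZMod 8) • X') * ((4:ZMod 8) • Y') = 0 := by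
    rw [smul_mul_assoc, mul_smul_comm, smul_smul]
    rw [show ((4:ZMod 8) * 4) = 0 by decide, zero_smul]
  have hzero' : ((4:ZMod 8) • Y') * ((4:ZMod 8) • X') = 0 := by
    rw [smul_mul_assoc, mul_smul_comm, smul_smul]
    rw [show ((4:ZMod 8) * 4) = 0 by decide, zero_smul]
  have h1 := four_mul_smul U Y' h4U
  have h2 := four_smul_mul V X' h4V
  have h3 := four_mul_smul V X' h4V
  have h4 := four_smul_mul U Y' h4U
  have h5 := four_mul_smul C X' h4C
  have h6 := four_mul_smul C Y' h4C
  rw [hAe, hBe]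
  simp only [mul_add, add_mul, h1, h2, h3, h4, h5, h6, hzero, hzero', mul_zero, add_zero, hUV]
  abel
end

abbrev f8 : GL (Fin 2) (ZMod 8) →* GL (Fin 2) (ZMod 4) :=
  Matrix.GeneralLinearGroup.map φ48

lemma entry_cong {a : GL (Fin 2) (ZMod 8)} {u : GL (Fin 2) (ZMod 4)}
    (h : f8 a = u) (U : Matrix (Fin 2) (Fin 2) (ZMod 8)) (hU : U.map φ48 = u.val) :
    ∀ i j, φ48 (a.val i j) = φ48 (U i j) := by
  intro i j
  have h1 : a.val.map φ48 = u.val := congrArg Units.val h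
  have h2 : φ48 (a.val i j) = u.val i j := by rw [← h1]; rfl
  have h3 : φ48 (U i j) = u.val i j := by rw [← hU]; rfl
  rw [h2, h3]

lemma c_mem (H : Subgroup (GL (Fin 2) (ZMod 8)))
    (hl : ∀ w : GL (Fin 2) (ZMod 4), ∃ h ∈ H, f8 h = w)
    (U V : Matrix (Fin 2) (Fin 2) (ZMod 8)) (c : GL (Fin 2) (ZMod 8))
    (u v : GL (Fin 2) (ZMod 4))
    (hu : U.map φ48 = u.val) (hv : V.map φ48 = v.val)
    (h4U : (4 : ZMod 8) • U = (4 : ZMod 8) • (1 : Matrix (Fin 2) (Fin 2) (ZMod 8)))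
    (h4V : (4 : ZMod 8) • V = (4 : ZMod 8) • (1 : Matrix (Fin 2) (Fin 2) (ZMod 8)))
    (h4C : (4 : ZMod 8) • c.val = (4 : ZMod 8) • (1 : Matrix (Fin 2) (Fin 2) (ZMod 8)))
    (hUV : U * V = c.val * (V * U)) : c ∈ H := by
  obtain ⟨a, ha, hfa⟩ := hl u
  obtain ⟨b, hb, hfb⟩ := hl v
  have key : a.val * b.val = c.val * (b.val * a.val) :=
    comm_key U V c.val a.val b.val h4U h4V h4C hUV (entry_cong hfa U hu) (entry_cong hfb V hv)
  have hab : a * b = c * (b * a) := by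
    apply Units.ext
    simpa [Units.val_mul, mul_assoc] using key
  have hc : c = (a * b) * (b * a)⁻¹ := by rw [hab]; group
  rw [hc]
  exact H.mul_mem (H.mul_mem ha hb) (H.inv_mem (H.mul_mem hb ha))

def gl4 (M : Matrix (Fin 2) (Fin 2) (ZMod 4)) (h : M * M = 1) : GL (Fin 2) (ZMod 4) :=
  ⟨M, M, h, h⟩

def u1 : GL (Fin 2) (ZMod 4) := gl4 !![3,0;0,1] (by decide)
def u2 : GL (Fin 2) (ZMod 4) := gl4 !![1,2;0,1] (by decide)
def u3 : GL (Fin 2) (ZMod 4) := gl4 !![1,0;2,1] (by decide)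

lemma c1_mem (H : Subgroup (GL (Fin 2) (ZMod 8)))
    (hl : ∀ w : GL (Fin 2) (ZMod 4), ∃ h ∈ H, f8 h = w) : c1 ∈ H :=
  c_mem H hl !![3,0;0,1] !![1,2;0,1] c1 u1 u2 (by decide) (by decide)
    (by decide) (by decide) (by decide) (by decide)

lemma c2_mem (H : Subgroup (GL (Fin 2) (ZMod 8)))
    (hl : ∀ w : GL (Fin 2) (ZMod 4), ∃ h ∈ H, f8 h = w) : c2 ∈ H :=
  c_mem H hl !![3,0;0,1] !![1,0;2,1] c2 u1 u3 (by decide) (by decide)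
    (by decide) (by decide) (by decide) (by decide)

lemma c3_mem (H : Subgroup (GL (Fin 2) (ZMod 8)))
    (hl : ∀ w : GL (Fin 2) (ZMod 4), ∃ h ∈ H, f8 h = w) : c3 ∈ H :=
  c_mem H hl !![1,2;0,1] !![1,0;2,1] c3 u2 u3 (by decide) (by decide)
    (by decide) (by decide) (by decide) (by decide)

lemma ker_cases (H : Subgroup (GL (Fin 2) (ZMod 8)))
    (hc1 : c1 ∈ H) (hc2 : c2 ∈ H) (hc3 : c3 ∈ H)
    (k : GL (Fin 2) (ZMod 8)) (hk : f8 k = 1) : k ∈ H ∨ c0 * k ∈ H := by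
  have e := entry_cong hk 1 (by decide)
  have e00 := cast_eq_cases _ _ (e 0 0)
  have e01 := cast_eq_cases _ _ (e 0 1)
  have e10 := cast_eq_cases _ _ (e 1 0)
  have e11 := cast_eq_cases _ _ (e 1 1)
  simp only [Matrix.one_apply_eq, Matrix.one_apply_ne, show ((0:Fin 2)) ≠ 1 by decide,
    show ((1:Fin 2)) ≠ 0 by decide, Ne, not_false_eq_true] at e00 e01 e10 e11
  have hval : k.val = !![k.val 0 0, k.val 0 1; k.val 1 0, k.val 1 1] := Matrix.eta_fin_two _
  rcases e00 with h00 | h00 <;> rcases e01 with h01 | h01 <;>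
    rcases e10 with h10 | h10 <;> rcases e11 with h11 | h11 <;>
    rw [h00, h01, h10, h11] at hval
  · left
    have hk2 : k = 1 := Units.ext (by rw [hval]; decide)
    rw [hk2]
    exact H.one_mem
  · right
    have hk2 : c0 * k = c3 := Units.ext (by rw [Units.val_mul, hval]; decide)
    rw [hk2]
    exact hc3
  · left
    have hk2 : k = c2 := Units.ext (by rw [hval]; decide)
    rw [hk2]
    exact hc2
  · right
    have hk2 : c0 * k = c3 * c2 := Units.ext (by rw [Units.val_mul, hval]; decide)
    rw [hk2]
    exact H.mul_mem hc3 hc2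
  · left
    have hk2 : k = c1 := Units.ext (by rw [hval]; decide)
    rw [hk2]
    exact hc1
  · right
    have hk2 : c0 * k = c3 * c1 := Units.ext (by rw [Units.val_mul, hval]; decide)
    rw [hk2]
    exact H.mul_mem hc3 hc1
  · left
    have hk2 : k = c1 * c2 := Units.ext (by rw [hval]; decide)
    rw [hk2]
    exact H.mul_mem hc1 hc2
  · right
    have hk2 : c0 * k = c3 * c1 * c2 := Units.ext (by rw [Units.val_mul, hval]; decide)
    rw [hk2]
    exact H.mul_mem (H.mul_mem hc3 hc1) hc2
  · right
    have hk2 : c0 * k = 1 := Units.ext (by rw [Units.val_mul, hval]; decide)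
    rw [hk2]
    exact H.one_mem
  · left
    have hk2 : k = c3 := Units.ext (by rw [hval]; decide)
    rw [hk2]
    exact hc3
  · right
    have hk2 : c0 * k = c2 := Units.ext (by rw [Units.val_mul, hval]; decide)
    rw [hk2]
    exact hc2
  · left
    have hk2 : k = c3 * c2 := Units.ext (by rw [hval]; decide)
    rw [hk2]
    exact H.mul_mem hc3 hc2
  · right
    have hk2 : c0 * k = c1 := Units.ext (by rw [Units.val_mul, hval]; decide)
    rw [hk2]
    exact hc1
  · left
    have hk2 : k = c3 * c1 := Units.ext (by rw [hval]; decide)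
    rw [hk2]
    exact H.mul_mem hc3 hc1
  · right
    have hk2 : c0 * k = c1 * c2 := Units.ext (by rw [Units.val_mul, hval]; decide)
    rw [hk2]
    exact H.mul_mem hc1 hc2
  · left
    have hk2 : k = c3 * c1 * c2 := Units.ext (by rw [hval]; decide)
    rw [hk2]
    exact H.mul_mem (H.mul_mem hc3 hc1) hc2

/-- A subgroup of `GL₂(ℤ/8ℤ)` that surjects onto `GL₂(ℤ/4ℤ)` has index at most 2. -/
theorem index_le_two_of_mod4_surj (H : Subgroup (GL (Fin 2) (ZMod 8)))
    (hsurj : Subgroup.map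
        (Matrix.GeneralLinearGroup.map
          (ZMod.castHom (by norm_num : (4 : ℕ) ∣ 8) (ZMod 4))) H = ⊤) :
    H.index ≤ 2 := by
  have hsurj' : Subgroup.map f8 H = ⊤ := hsurj
  have hl : ∀ w : GL (Fin 2) (ZMod 4), ∃ h ∈ H, f8 h = w := by
    intro w
    have hw : w ∈ Subgroup.map f8 H := by rw [hsurj']; trivial
    simpa [Subgroup.mem_map] using hw
  have hc1 := c1_mem H hl
  have hc2 := c2_mem H hl
  have hc3 := c3_mem H hl
  have hc0inv : c0⁻¹ = c0 := by
    apply Units.ext; rfl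
  have hsur : Function.Surjective (fun b : Bool =>
      if b then ((1 : GL (Fin 2) (ZMod 8)) : GL (Fin 2) (ZMod 8) ⧸ H)
      else ((c0 : GL (Fin 2) (ZMod 8)) : GL (Fin 2) (ZMod 8) ⧸ H)) := by
    intro q
    obtain ⟨g, rfl⟩ := QuotientGroup.mk_surjective q
    obtain ⟨h, hh, hfh⟩ := hl (f8 g)
    have hk : f8 (g * h⁻¹) = 1 := by
      rw [_root_.map_mul, _root_.map_inv, hfh, mul_inv_cancel]
    rcases ker_cases H hc1 hc2 hc3 (g * h⁻¹) hk with hmem | hmem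
    · refine ⟨true, ?_⟩
      have hg : g ∈ H := by
        have := H.mul_mem hmem hh
        simpa using this
      simpa [QuotientGroup.eq] using hg
    · refine ⟨false, ?_⟩
      have hg : c0⁻¹ * g ∈ H := by
        have := H.mul_mem hmem hh
        rw [hc0inv]
        simpa [mul_assoc] using this
      simpa [QuotientGroup.eq] using hg
  calc H.index = Nat.card (GL (Fin 2) (ZMod 8) ⧸ H) := rfl
    _ ≤ Nat.card Bool := Nat.card_le_card_of_surjective _ hsur
    _ = 2 := by simp [Nat.card_eq_fintype_card]
end
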